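/- For all t ≥ 1, there exists a bijection Λ from M_0^{6t} \ {[01]^{3t}} to M_1^{6t} such that for every S in the domain either S ⊂ Λ(S) or Λ(S) ⊂ S, and moreover Λ([1]^{6t}) = [1]^{6t-2}00 (i.e. Λ maps the full set [6t] to [6t-2]). -/

import Mathlib

/-- `k` concatenated copies of the binary string `γ`. -/
def reps (γ : List Bool) (k : ℕ) : List Bool := (List.replicate k γ).flatten

/-- The support vector `v` ends (on the right) with the string `β`. -/
def EndsWith (v β : List Bool) : Prop := ∃ γ : List Bool, v = γ ++ β

/-- Pointwise order on support vectors: `v ≤ w` iff every element of the subset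
encoded by `v` belongs to the subset encoded by `w`. -/
def vle (v w : List Bool) : Prop :=
  ∀ i : ℕ, v.getD i false = true → w.getD i false = true

/-! Read a support vector from the right in blocks of two. `Λ` skips the trailing blocks `01`
and applies the 3-cycle `00 ↦ 10 ↦ 11 ↦ 00` to the first other block (`Φ` adds one element,
`Ψ` removes two); if every block is `01` it does nothing. Each move changes `|S|` by `+1` or `-2`,
so by `+1` modulo 3, and keeps `S` comparable with `Λ(S)`. Since `Λ³ = id`, `Λ` maps
`M_0 \ {[01]^{3t}}` bijectively onto `M_1`, with inverse `Λ²`. -/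

theorem reps_succ (γ : List Bool) (k : ℕ) : reps γ (k + 1) = γ ++ reps γ k := by
  simp [reps, List.replicate_succ]

theorem count_true_reps_false_true (k : ℕ) : (reps [false, true] k).count true = k := by
  induction k with
  | zero => rfl
  | succ k ih => simp [reps_succ, ih]

theorem reverse_reps_false_true (k : ℕ) :
    (reps [false, true] k).reverse = reps [true, false] k := by
  induction k with
  | zero => rfl
  | succ k ih =>
    calc (reps [false, true] (k + 1)).reverse
        = reps [true, false] k ++ [true, false] := by simp [reps_succ, ih]
      _ = reps [true, false] (k + 1) := by
        simp [reps, List.replicate_succ', List.flatten_append]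

-- `Λ` on the reversed support vector, so that the blocks of two are read from the head.
def revLambda : List Bool → List Bool
  | true :: false :: r => true :: false :: revLambda r
  | false :: false :: r => false :: true :: r
  | false :: true :: r => true :: true :: r
  | true :: true :: r => false :: false :: r
  | l => l

theorem revLambda_revLambda_revLambda (l : List Bool) :
    revLambda (revLambda (revLambda l)) = l := by
  induction l using revLambda.induct <;> simp_all [revLambda]

theorem length_revLambda (l : List Bool) : (revLambda l).length = l.length := by
  induction l using revLambda.induct <;> simp_all [revLambda]

theorem revLambda_le_or_ge (l : List Bool) :
    List.Forall₂ (· ≤ ·) l (revLambda l) ∨ List.Forall₂ (· ≤ ·) (revLambda l) l := by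
  induction l using revLambda.induct <;> simp_all [revLambda]

theorem revLambda_reps_true_false (k : ℕ) :
    revLambda (reps [true, false] k) = reps [true, false] k := by
  induction k with
  | zero => rfl
  | succ k ih => simp [reps_succ, revLambda, ih]

theorem count_revLambda {k : ℕ} {l : List Bool} (hl : l.length = 2 * k)
    (hne : l ≠ reps [true, false] k) :
    (revLambda l).count true % 3 = (l.count true + 1) % 3 := by
  induction l using revLambda.induct generalizing k with
  | case1 r ih =>
    obtain ⟨k, rfl⟩ : ∃ k', k = k' + 1 := ⟨k - 1, by simp at hl; omega⟩
    have := ih (k := k) (by simp at hl; omega) (by simpa [reps_succ] using hne)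
    simp only [revLambda, List.count_cons] at this ⊢
    omega
  | case2 | case3 | case4 => simp [revLambda] <;> omega
  | case5 l h10 h00 h01 h11 =>
    exfalso
    match l, k with
    | [], 0 => exact hne rfl
    | [_], _ => simp at hl; omega
    | true :: false :: r, _ => exact h10 r rfl
    | false :: false :: r, _ => exact h00 r rfl
    | false :: true :: r, _ => exact h01 r rfl
    | true :: true :: r, _ => exact h11 r rfl

theorem vle_of_forall₂ {v w : List Bool} (h : List.Forall₂ (· ≤ ·) v w) : vle v w := by
  induction h with
  | nil => intro i hi; simp at hi
  | cons hab _ ih =>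
    rintro (_ | i) hi
    · exact Bool.le_iff_imp.1 hab hi
    · exact ih i hi

def lambdaMap (v : List Bool) : List Bool := (revLambda v.reverse).reverse

theorem lambdaMap_lambdaMap_lambdaMap (v : List Bool) :
    lambdaMap (lambdaMap (lambdaMap v)) = v := by
  simp [lambdaMap, revLambda_revLambda_revLambda]

theorem length_lambdaMap (v : List Bool) : (lambdaMap v).length = v.length := by
  simp [lambdaMap, length_revLambda]

theorem vle_lambdaMap_or (v : List Bool) : vle v (lambdaMap v) ∨ vle (lambdaMap v) v := by
  rcases revLambda_le_or_ge v.reverse with h | h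
  · exact .inl (vle_of_forall₂ (by simpa [lambdaMap] using List.forall₂_reverse_iff.2 h))
  · exact .inr (vle_of_forall₂ (by simpa [lambdaMap] using List.forall₂_reverse_iff.2 h))

theorem lambdaMap_reps (k : ℕ) : lambdaMap (reps [false, true] k) = reps [false, true] k := by
  rw [lambdaMap, reverse_reps_false_true, revLambda_reps_true_false, ← reverse_reps_false_true,
    List.reverse_reverse]

theorem count_lambdaMap {k : ℕ} {v : List Bool} (hv : v.length = 2 * k)
    (hne : v ≠ reps [false, true] k) :
    (lambdaMap v).count true % 3 = (v.count true + 1) % 3 := by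
  rw [lambdaMap, List.count_reverse, ← List.count_reverse (l := v)]
  refine count_revLambda (by simpa using hv) fun h => hne ?_
  rw [← reverse_reps_false_true, List.reverse_inj] at h
  exact h

theorem lambdaMap_replicate_true (m : ℕ) :
    lambdaMap (List.replicate (m + 2) true) = List.replicate m true ++ [false, false] := by
  rw [lambdaMap, List.reverse_replicate]
  simp [List.replicate_succ, revLambda]

theorem Set.bijOn_of_period_three {α : Type*} {f : α → α} {s t : Set α}
    (hf : ∀ x, f (f (f x)) = x) (hst : Set.MapsTo f s t) (hts : Set.MapsTo (f ∘ f) t s) :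
    Set.BijOn f s t :=
  Set.InvOn.bijOn ⟨fun x _ => hf x, fun y _ => hf y⟩ hst hts

/-- For all `t ≥ 1`, there exists a bijection
`Λ : M_0^{6t} \ {[01]^{3t}} → M_1^{6t}` (where `M_r^n` is the family of subsets
of `[n]` of cardinality `≡ r (mod 3)`) such that for every `S` in the domain
either `S ⊂ Λ(S)` or `Λ(S) ⊂ S`, and `Λ([1]^{6t}) = [1]^{6t-2}00`. -/
theorem exists_Lambda (t : ℕ) (ht : 1 ≤ t) :
    ∃ Lam : List Bool → List Bool,
      Set.BijOn Lam
        ({v | v.length = 6 * t ∧ v.count true % 3 = 0} \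
          {reps [false, true] (3 * t)})
        {v | v.length = 6 * t ∧ v.count true % 3 = 1} ∧
      (∀ v ∈ ({v | v.length = 6 * t ∧ v.count true % 3 = 0} \
          {reps [false, true] (3 * t)} : Set (List Bool)),
        (vle v (Lam v) ∧ v ≠ Lam v) ∨ (vle (Lam v) v ∧ Lam v ≠ v)) ∧
      Lam (List.replicate (6 * t) true) =
        List.replicate (6 * t - 2) true ++ [false, false] := by
  have hcount {v : List Bool} (hv : v.length = 6 * t) (hne : v ≠ reps [false, true] (3 * t)) :
      (lambdaMap v).count true % 3 = (v.count true + 1) % 3 :=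
    count_lambdaMap (k := 3 * t) (by omega) hne
  have hreps {v : List Bool} (hv : v.count true % 3 ≠ 0) : v ≠ reps [false, true] (3 * t) := by
    rintro rfl
    simp [count_true_reps_false_true] at hv
  refine ⟨lambdaMap, Set.bijOn_of_period_three lambdaMap_lambdaMap_lambdaMap ?_ ?_, ?_, ?_⟩
  · rintro v ⟨⟨hv, h0⟩, hne⟩
    exact ⟨(length_lambdaMap v).trans hv, by rw [hcount hv hne]; omega⟩
  · rintro w ⟨hw, h1⟩
    rw [Function.comp_apply]
    have hw' : (lambdaMap w).length = 6 * t := (length_lambdaMap w).trans hw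
    have h2 : (lambdaMap w).count true % 3 = 2 := by rw [hcount hw (hreps (by omega))]; omega
    refine ⟨⟨(length_lambdaMap _).trans hw', by rw [hcount hw' (hreps (by omega))]; omega⟩, ?_⟩
    intro h
    have := congrArg lambdaMap h
    rw [lambdaMap_lambdaMap_lambdaMap, lambdaMap_reps] at this
    exact hreps (by omega) this
  · rintro v ⟨⟨hv, h0⟩, hne⟩
    have hshift : v ≠ lambdaMap v := fun h => by
      have := hcount hv hne
      rw [← h] at this
      omega
    exact (vle_lambdaMap_or v).imp (⟨·, hshift⟩) (⟨·, hshift.symm⟩)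
  · obtain ⟨m, hm⟩ : ∃ m, 6 * t = m + 2 := ⟨6 * t - 2, by omega⟩
    rw [hm, lambdaMap_replicate_true, Nat.add_sub_cancel]
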